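/- For all 0 ≤ s ≤ t, the random variable Λ_{t∧τ} − Λ_{s∧τ} is integrable and, almost surely, E[Λ_{t∧τ} − Λ_{s∧τ} | ℱ_s] = 1_{{s<τ}} · (1 − E[e^{−(Λ_t − Λ_s)} | 𝔉̂_s]). -/

import Mathlib

/-!
Every `ℱ_s`-set agrees on `{s < τ}` with an `𝔉̂_s`-set, and both sides of the claim vanish
off `{s < τ}`; so it suffices that both have the same integral over every `B ∈ 𝔉̂_s`, namely
`∫_B (e^{-Λ_s} - e^{-Λ_t})`. For the right-hand side this follows by pulling `𝔉̂_s`-measurable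
factors out of `E[1_{s<τ} | 𝔉̂_s] = e^{-Λ_s}`.

For the left-hand side, approximate `Λ_{t∧τ} - Λ_{s∧τ}` from below by
`∑ 1_{u_{i+1} < τ} (Λ_{u_{i+1}} - Λ_{u_i})` along uniform partitions of `[s, t]`. The increment
is `𝔉̂_{u_{i+1}}`-measurable, so conditioning on `𝔉̂_{u_{i+1}}` replaces `1_{u_{i+1} < τ}` by
`e^{-Λ_{u_{i+1}}}`, which turns the sum into a Riemann–Stieltjes sum for
`∫_s^t e^{-Λ} dΛ = e^{-Λ_s} - e^{-Λ_t}`. By uniform continuity of `Λ` on `[s, t]` both sums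
converge pathwise, lying below their limits, so Fatou's lemma passes to the limit in lower
integrals; this is needed because `Λ_t` itself need not be integrable.
-/

open MeasureTheory Filter Topology Finset
open scoped ENNReal

noncomputable def uniformPartition (s t : ℝ) (n i : ℕ) : ℝ := s + i * ((t - s) / (n + 1))

section UniformPartition

variable {s t : ℝ} {n i : ℕ}

@[simp]
lemma uniformPartition_zero : uniformPartition s t n 0 = s := by
  simp [uniformPartition]

@[simp]
lemma uniformPartition_last : uniformPartition s t n (n + 1) = t := by
  simp only [uniformPartition]
  push_cast
  field_simp
  ring

lemma uniformPartition_succ_sub :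
    uniformPartition s t n (i + 1) - uniformPartition s t n i = (t - s) / (n + 1) := by
  simp only [uniformPartition]
  push_cast
  ring

lemma monotone_uniformPartition (hst : s ≤ t) : Monotone (uniformPartition s t n) := by
  intro i j hij
  have : (0 : ℝ) ≤ (t - s) / (n + 1) := div_nonneg (sub_nonneg.2 hst) (by positivity)
  simp only [uniformPartition]
  gcongr

lemma uniformPartition_mem_Icc (hst : s ≤ t) (hi : i ≤ n + 1) :
    uniformPartition s t n i ∈ Set.Icc s t := by
  constructor
  · simpa using monotone_uniformPartition hst (Nat.zero_le i)
  · simpa using monotone_uniformPartition (n := n) hst hi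

lemma ContinuousOn.eventually_uniformPartition_sub_le {f : ℝ → ℝ}
    (hf : ContinuousOn f (Set.Icc s t)) (hst : s ≤ t) {ε : ℝ} (hε : 0 < ε) :
    ∀ᶠ n in atTop, ∀ i < n + 1,
      f (uniformPartition s t n (i + 1)) - f (uniformPartition s t n i) ≤ ε := by
  obtain ⟨δ, hδ, hfδ⟩ := Metric.uniformContinuousOn_iff.1
    (isCompact_Icc.uniformContinuousOn_of_continuous hf) ε hε
  have hmesh : Tendsto (fun n : ℕ => (t - s) * (1 / (n + 1))) atTop (𝓝 0) := by
    simpa only [mul_zero] using tendsto_one_div_add_atTop_nhds_zero_nat.const_mul (t - s)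
  filter_upwards [(tendsto_order.1 hmesh).2 δ hδ] with n hn i hi
  have hdist : dist (uniformPartition s t n (i + 1)) (uniformPartition s t n i) < δ := by
    rw [Real.dist_eq, uniformPartition_succ_sub, abs_of_nonneg (by
      exact div_nonneg (sub_nonneg.2 hst) (by positivity))]
    rwa [mul_one_div] at hn
  exact (le_abs_self _).trans (hfδ _ (uniformPartition_mem_Icc hst hi) _
    (uniformPartition_mem_Icc hst hi.le) hdist).le

end UniformPartition

lemma sum_range_le_mul_sub {N : ℕ} {d φ : ℕ → ℝ} {ε : ℝ}
    (h : ∀ i < N, d i ≤ ε * (φ i - φ (i + 1))) :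
    ∑ i ∈ range N, d i ≤ ε * (φ 0 - φ N) := by
  rw [← sum_range_sub', mul_sum]
  exact sum_le_sum fun i hi => h i (mem_range.1 hi)

lemma tendsto_of_le_of_eventually_sub_le {x : ℕ → ℝ} {a : ℝ} (hle : ∀ n, x n ≤ a)
    (h : ∀ ε > 0, ∀ᶠ n in atTop, a - x n ≤ ε) : Tendsto x atTop (𝓝 a) := by
  refine tendsto_order.2
    ⟨fun b hb => ?_, fun b hb => Eventually.of_forall fun n => (hle n).trans_lt hb⟩
  filter_upwards [h ((a - b) / 2) (by linarith)] with n hn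
  linarith

namespace Real

lemma exp_neg_mul_sub_le_exp_neg_sub_exp_neg (a b : ℝ) :
    exp (-b) * (b - a) ≤ exp (-a) - exp (-b) := by
  have h : exp (-b) * (b - a + 1) ≤ exp (-b) * exp (b - a) :=
    mul_le_mul_of_nonneg_left (add_one_le_exp _) (exp_pos _).le
  rw [← exp_add, show -b + (b - a) = -a by ring] at h
  linarith

lemma exp_neg_sub_exp_neg_sub_le {a b : ℝ} (hab : a ≤ b) :
    exp (-a) - exp (-b) - exp (-b) * (b - a) ≤ (b - a) * (exp (-a) - exp (-b)) := by
  have h : exp (-a) * (-(b - a) + 1) ≤ exp (-a) * exp (-(b - a)) :=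
    mul_le_mul_of_nonneg_left (add_one_le_exp _) (exp_pos _).le
  rw [← exp_add, show -a + -(b - a) = -b by ring] at h
  have : exp (-b) ≤ exp (-a) := exp_le_exp.2 (by linarith)
  nlinarith

end Real

section RiemannSums

variable {f : ℝ → ℝ} {θ a b s t : ℝ} {n : ℕ}

lemma ite_lt_sub_le_sub_min (hab : a ≤ b) (hf : MonotoneOn f (Set.Icc a b)) :
    (if b < θ then f b - f a else 0) ≤ f (min b θ) - f (min a θ) := by
  rcases lt_or_ge b θ with hb | hb
  · rw [if_pos hb, min_eq_left hb.le, min_eq_left (hab.trans hb.le)]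
  rw [if_neg hb.not_gt, min_eq_right hb]
  rcases lt_or_ge a θ with ha | ha
  · rw [min_eq_left ha.le, sub_nonneg]
    exact hf ⟨le_rfl, hab⟩ ⟨ha.le, hb⟩ ha.le
  · rw [min_eq_right ha, sub_self]

lemma sub_min_sub_ite_lt_le (hab : a ≤ b) (hf : MonotoneOn f (Set.Icc a b)) :
    f (min b θ) - f (min a θ) - (if b < θ then f b - f a else 0)
      ≤ (f b - f a) * ((if a < θ then 1 else 0) - (if b < θ then 1 else 0)) := by
  rcases lt_or_ge b θ with hb | hb
  · simp [hb, hab.trans_lt hb, min_eq_left hb.le, min_eq_left (hab.trans hb.le)]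
  rcases lt_or_ge a θ with ha | ha
  · simp only [if_neg hb.not_gt, if_pos ha, min_eq_right hb, min_eq_left ha.le]
    have := hf ⟨ha.le, hb⟩ ⟨hab, le_rfl⟩ hb
    linarith
  · simp [hb.not_gt, ha.not_gt, min_eq_right hb, min_eq_right ha]

lemma sub_eq_sum_uniformPartition (g : ℝ → ℝ) :
    g t - g s = ∑ i ∈ range (n + 1),
      (g (uniformPartition s t n (i + 1)) - g (uniformPartition s t n i)) := by
  rw [sum_range_sub (fun i => g (uniformPartition s t n i)), uniformPartition_last,
    uniformPartition_zero]

lemma sub_eq_sum_uniformPartition' (g : ℝ → ℝ) :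
    g s - g t = ∑ i ∈ range (n + 1),
      (g (uniformPartition s t n i) - g (uniformPartition s t n (i + 1))) := by
  rw [sum_range_sub' (fun i => g (uniformPartition s t n i)), uniformPartition_last,
    uniformPartition_zero]

lemma MonotoneOn.mono_uniformPartition (hst : s ≤ t) (hf : MonotoneOn f (Set.Icc s t))
    {i : ℕ} (hi : i < n + 1) :
    MonotoneOn f (Set.Icc (uniformPartition s t n i) (uniformPartition s t n (i + 1))) :=
  hf.mono (Set.Icc_subset_Icc (uniformPartition_mem_Icc hst hi.le).1
    (uniformPartition_mem_Icc hst hi).2)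

lemma sub_uniformPartition_nonneg (hst : s ≤ t) (hf : MonotoneOn f (Set.Icc s t))
    {i : ℕ} (hi : i < n + 1) :
    0 ≤ f (uniformPartition s t n (i + 1)) - f (uniformPartition s t n i) :=
  sub_nonneg.2 (hf (uniformPartition_mem_Icc hst hi.le) (uniformPartition_mem_Icc hst hi)
    (monotone_uniformPartition hst (Nat.le_succ i)))

lemma sub_min_nonneg (hst : s ≤ t) (hf : MonotoneOn f (Set.Icc s t)) :
    0 ≤ f (min t θ) - f (min s θ) := by
  refine le_trans ?_ (ite_lt_sub_le_sub_min hst hf)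
  split_ifs
  exacts [sub_nonneg.2 (hf ⟨le_rfl, hst⟩ ⟨hst, le_rfl⟩ hst), le_rfl]

lemma sub_min_eq_zero_of_le (hθ : θ ≤ s) (hst : s ≤ t) : f (min t θ) - f (min s θ) = 0 := by
  rw [min_eq_right (hθ.trans hst), min_eq_right hθ, sub_self]

noncomputable def stoppedRiemannSum (f : ℝ → ℝ) (θ s t : ℝ) (n : ℕ) : ℝ :=
  ∑ i ∈ range (n + 1), if uniformPartition s t n (i + 1) < θ then
    f (uniformPartition s t n (i + 1)) - f (uniformPartition s t n i) else 0

noncomputable def expRiemannSum (f : ℝ → ℝ) (s t : ℝ) (n : ℕ) : ℝ :=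
  ∑ i ∈ range (n + 1), Real.exp (-f (uniformPartition s t n (i + 1))) *
    (f (uniformPartition s t n (i + 1)) - f (uniformPartition s t n i))

lemma stoppedRiemannSum_le (hst : s ≤ t) (hf : MonotoneOn f (Set.Icc s t)) :
    stoppedRiemannSum f θ s t n ≤ f (min t θ) - f (min s θ) := by
  rw [sub_eq_sum_uniformPartition (fun r => f (min r θ)) (n := n)]
  exact sum_le_sum fun i hi => ite_lt_sub_le_sub_min
    (monotone_uniformPartition hst (Nat.le_succ i))
    (hf.mono_uniformPartition hst (mem_range.1 hi))

lemma tendsto_stoppedRiemannSum (hst : s ≤ t) (hf : MonotoneOn f (Set.Icc s t))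
    (hfc : ContinuousOn f (Set.Icc s t)) :
    Tendsto (stoppedRiemannSum f θ s t) atTop (𝓝 (f (min t θ) - f (min s θ))) := by
  refine tendsto_of_le_of_eventually_sub_le (fun n => stoppedRiemannSum_le hst hf)
    fun ε hε => ?_
  filter_upwards [hfc.eventually_uniformPartition_sub_le hst hε] with n hn
  -- only the cell containing `θ` contributes an error, and there `φ` drops by one
  set φ : ℕ → ℝ := fun i => if uniformPartition s t n i < θ then 1 else 0
  have hφ : φ 0 - φ (n + 1) ≤ 1 := by
    simp only [φ]
    split_ifs <;> norm_num
  rw [sub_eq_sum_uniformPartition (fun r => f (min r θ)) (n := n), stoppedRiemannSum,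
    ← sum_sub_distrib]
  refine (sum_range_le_mul_sub fun i hi => ?_).trans
    (by simpa using mul_le_mul_of_nonneg_left hφ hε.le)
  have hmono := monotone_uniformPartition (n := n) hst (Nat.le_succ i)
  refine (sub_min_sub_ite_lt_le hmono (hf.mono_uniformPartition hst hi)).trans ?_
  refine mul_le_mul_of_nonneg_right (hn i hi) ?_
  simp only [sub_nonneg]
  split_ifs with h₁ h₂ <;> first | exact absurd (hmono.trans_lt h₁) h₂ | norm_num

lemma expRiemannSum_le :
    expRiemannSum f s t n ≤ Real.exp (-f s) - Real.exp (-f t) := by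
  rw [sub_eq_sum_uniformPartition' (fun r => Real.exp (-f r)) (n := n)]
  exact sum_le_sum fun _ _ => Real.exp_neg_mul_sub_le_exp_neg_sub_exp_neg _ _

lemma tendsto_expRiemannSum (hst : s ≤ t) (hf : MonotoneOn f (Set.Icc s t))
    (hfc : ContinuousOn f (Set.Icc s t)) (hfs : 0 ≤ f s) :
    Tendsto (expRiemannSum f s t) atTop (𝓝 (Real.exp (-f s) - Real.exp (-f t))) := by
  refine tendsto_of_le_of_eventually_sub_le (fun n => expRiemannSum_le) fun ε hε => ?_
  filter_upwards [hfc.eventually_uniformPartition_sub_le hst hε] with n hn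
  set φ : ℕ → ℝ := fun i => Real.exp (-f (uniformPartition s t n i))
  have hφ : φ 0 - φ (n + 1) ≤ 1 := by
    simp only [φ, uniformPartition_zero, uniformPartition_last]
    linarith [Real.exp_le_one_iff.2 (neg_nonpos.2 hfs), Real.exp_pos (-f t)]
  rw [sub_eq_sum_uniformPartition' (fun r => Real.exp (-f r)) (n := n), expRiemannSum,
    ← sum_sub_distrib]
  refine (sum_range_le_mul_sub fun i hi => ?_).trans
    (by simpa using mul_le_mul_of_nonneg_left hφ hε.le)
  have hinc := sub_uniformPartition_nonneg (f := f) hst hf hi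
  refine (Real.exp_neg_sub_exp_neg_sub_le (sub_nonneg.1 hinc)).trans ?_
  exact mul_le_mul_of_nonneg_right (hn i hi)
    (sub_nonneg.2 (Real.exp_le_exp.2 (neg_le_neg (sub_nonneg.1 hinc))))

end RiemannSums

section ConditionalExpectation

variable {Ω : Type*}

lemma exists_inter_eq_of_measurableSet_sup_generateFrom {m : MeasurableSpace Ω} {S : Set Ω}
    {𝒞 : Set (Set Ω)} (h𝒞 : ∀ C ∈ 𝒞, S ⊆ C) {A : Set Ω}
    (hA : MeasurableSet[m ⊔ MeasurableSpace.generateFrom 𝒞] A) :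
    ∃ B, MeasurableSet[m] B ∧ S ∩ A = S ∩ B := by
  have hle : m ⊔ MeasurableSpace.generateFrom 𝒞
      ≤ (m.comap ((↑) : S → Ω)).map ((↑) : S → Ω) := by
    refine sup_le MeasurableSpace.le_map_comap (MeasurableSpace.generateFrom_le fun C hC => ?_)
    refine ⟨Set.univ, MeasurableSet.univ, Subtype.preimage_coe_eq_preimage_coe_iff.2 ?_⟩
    rw [Set.inter_univ, Set.inter_eq_left.2 (h𝒞 C hC)]
  obtain ⟨B, hB, hBA⟩ := hle A hA
  exact ⟨B, hB, (Subtype.preimage_coe_eq_preimage_coe_iff.1 hBA).symm⟩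

lemma ae_eq_condExp_of_forall_setIntegral_eq_of_inter_eq {m m' m0 : MeasurableSpace Ω}
    {μ : Measure Ω} [IsFiniteMeasure μ] (hm : m ≤ m0) (hm' : m' ≤ m0) {S : Set Ω}
    (htrace : ∀ A, MeasurableSet[m'] A → ∃ B, MeasurableSet[m] B ∧ S ∩ A = S ∩ B)
    {f g : Ω → ℝ} (hf : Integrable f μ) (hg : Integrable g μ)
    (hgm : StronglyMeasurable[m'] g)
    (hfS : Function.support f ⊆ S) (hgS : Function.support g ⊆ S)
    (hfg : ∀ B, MeasurableSet[m] B → ∫ x in B, g x ∂μ = ∫ x in B, f x ∂μ) :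
    g =ᵐ[μ] μ[f | m'] := by
  refine ae_eq_condExp_of_forall_setIntegral_eq hm' hf (fun _ _ _ => hg.integrableOn)
    (fun A hA _ => ?_) hgm.aestronglyMeasurable
  obtain ⟨B, hB, hAB⟩ := htrace A hA
  have hsupport : ∀ h : Ω → ℝ, Function.support h ⊆ S →
      ∫ x in A, h x ∂μ = ∫ x in B, h x ∂μ := by
    intro h hS
    rw [← integral_indicator (hm' A hA), ← integral_indicator (hm B hB),
      ← Set.indicator_eq_self.2 hS, Set.indicator_indicator, Set.indicator_indicator,
      Set.inter_comm A, hAB, Set.inter_comm]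
  rw [hsupport g hgS, hsupport f hfS, hfg B hB]

variable {m m0 : MeasurableSpace Ω} {μ : Measure Ω} [IsFiniteMeasure μ]
  {S : Set Ω} {G : Ω → ℝ}

lemma setLIntegral_eq_lintegral_mul_of_condExp_indicator (hm : m ≤ m0) (hS : MeasurableSet S)
    (hGm : Measurable[m] G) (hG : 0 ≤ G)
    (hSG : μ[S.indicator (fun _ => (1 : ℝ)) | m] =ᵐ[μ] G) {g : Ω → ℝ≥0∞}
    (hg : Measurable[m] g) :
    ∫⁻ x in S, g x ∂μ = ∫⁻ x, g x * ENNReal.ofReal (G x) ∂μ := by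
  have hGint : Integrable G μ := integrable_condExp.congr hSG
  have htrim : (μ.restrict S).trim hm
      = (μ.withDensity fun x => ENNReal.ofReal (G x)).trim hm := by
    refine @Measure.ext _ m _ _ fun C hC => ?_
    have hC0 := hm C hC
    rw [trim_measurableSet_eq hm hC, trim_measurableSet_eq hm hC,
      Measure.restrict_apply hC0, withDensity_apply _ hC0,
      ← ofReal_integral_eq_lintegral_ofReal hGint.integrableOn (ae_of_all _ hG),
      ← setIntegral_congr_ae hC0 (hSG.mono fun x hx _ => hx),
      setIntegral_condExp hm ((integrable_const 1).indicator hS) hC,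
      setIntegral_indicator hS, setIntegral_const, smul_eq_mul, mul_one, ofReal_measureReal]
  calc ∫⁻ x in S, g x ∂μ
      = ∫⁻ x, g x ∂(μ.restrict S).trim hm := (lintegral_trim hm hg).symm
    _ = ∫⁻ x, g x ∂(μ.withDensity fun x => ENNReal.ofReal (G x)) := by
      rw [htrim, lintegral_trim hm hg]
    _ = ∫⁻ x, g x * ENNReal.ofReal (G x) ∂μ := by
      rw [lintegral_withDensity_eq_lintegral_mul _ (hGm.mono hm le_rfl).ennreal_ofReal
        (hg.mono hm le_rfl)]
      simp only [Pi.mul_apply, mul_comm]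

lemma setLIntegral_indicator_eq_of_condExp_indicator (hm : m ≤ m0) (hS : MeasurableSet S)
    (hGm : Measurable[m] G) (hG : 0 ≤ G)
    (hSG : μ[S.indicator (fun _ => (1 : ℝ)) | m] =ᵐ[μ] G)
    {B : Set Ω} (hB : MeasurableSet[m] B)
    {g : Ω → ℝ≥0∞} (hg : Measurable[m] g) :
    ∫⁻ x in B, S.indicator g x ∂μ = ∫⁻ x in B, g x * ENNReal.ofReal (G x) ∂μ := by
  rw [← lintegral_indicator (hm B hB), ← lintegral_indicator (hm B hB), Set.indicator_indicator,
    Set.inter_comm, ← Set.indicator_indicator, lintegral_indicator hS,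
    setLIntegral_eq_lintegral_mul_of_condExp_indicator hm hS hGm hG hSG (hg.indicator hB)]
  simp only [Set.indicator_mul_left]

end ConditionalExpectation

lemma tendsto_lintegral_of_tendsto_of_le {α : Type*} [MeasurableSpace α] {μ : Measure α}
    {f : ℕ → α → ℝ≥0∞} {F : α → ℝ≥0∞} (hf : ∀ n, AEMeasurable (f n) μ)
    (hle : ∀ n, f n ≤ F)
    (hlim : ∀ a, Tendsto (fun n => f n a) atTop (𝓝 (F a))) :
    Tendsto (fun n => ∫⁻ a, f n a ∂μ) atTop (𝓝 (∫⁻ a, F a ∂μ)) := by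
  refine tendsto_of_le_liminf_of_limsup_le ?_
    (limsup_le_of_le (by isBoundedDefault) (Eventually.of_forall fun n => lintegral_mono (hle n)))
  calc ∫⁻ a, F a ∂μ = ∫⁻ a, liminf (fun n => f n a) atTop ∂μ :=
        lintegral_congr fun a => (hlim a).liminf_eq.symm
    _ ≤ _ := lintegral_liminf_le' hf

section HazardProcess

variable {Ω : Type*} {m0 : MeasurableSpace Ω} {μ : Measure Ω} [IsFiniteMeasure μ]
  {𝔉 : Filtration ℝ m0} {τ : Ω → ℝ} {Λ : ℝ → Ω → ℝ} {s t : ℝ}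

lemma measurable_stoppedRiemannSum (hτ : Measurable τ)
    (hΛ : ∀ r ∈ Set.Icc s t, Measurable (Λ r)) (hst : s ≤ t) (n : ℕ) :
    Measurable fun ω => stoppedRiemannSum (fun r => Λ r ω) (τ ω) s t n :=
  Finset.measurable_sum _ fun _ hi => Measurable.ite (measurableSet_lt measurable_const hτ)
    ((hΛ _ (uniformPartition_mem_Icc hst (mem_range.1 hi))).sub
      (hΛ _ (uniformPartition_mem_Icc hst (mem_range.1 hi).le))) measurable_const

lemma measurable_expRiemannSum (hΛ : ∀ r ∈ Set.Icc s t, Measurable (Λ r)) (hst : s ≤ t)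
    (n : ℕ) : Measurable fun ω => expRiemannSum (fun r => Λ r ω) s t n :=
  Finset.measurable_sum _ fun _ hi =>
    have hΛi := hΛ _ (uniformPartition_mem_Icc hst (mem_range.1 hi))
    hΛi.neg.exp.mul
      (hΛi.sub (hΛ _ (uniformPartition_mem_Icc hst (mem_range.1 hi).le)))

lemma measurable_sub_min (hτ : Measurable τ) (hΛ : ∀ r ∈ Set.Icc s t, Measurable (Λ r))
    (hΛmono : ∀ ω, MonotoneOn (fun r => Λ r ω) (Set.Icc s t))
    (hΛcont : ∀ ω, ContinuousOn (fun r => Λ r ω) (Set.Icc s t)) (hst : s ≤ t) :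
    Measurable fun ω => Λ (min t (τ ω)) ω - Λ (min s (τ ω)) ω :=
  measurable_of_tendsto_metrizable (measurable_stoppedRiemannSum hτ hΛ hst)
    (tendsto_pi_nhds.2 fun ω => tendsto_stoppedRiemannSum hst (hΛmono ω) (hΛcont ω))

lemma setLIntegral_stoppedRiemannSum_eq (hτ : Measurable τ)
    (hΛadapted : ∀ r, 0 ≤ r → Measurable[𝔉 r] (Λ r))
    (hΛmono : ∀ ω, MonotoneOn (fun r => Λ r ω) (Set.Icc s t))
    (hsurv : ∀ r, 0 ≤ r → μ[{ω | r < τ ω}.indicator (fun _ => (1 : ℝ)) | 𝔉 r]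
      =ᵐ[μ] fun ω => Real.exp (-Λ r ω))
    (hs : 0 ≤ s) (hst : s ≤ t) {B : Set Ω} (hB : MeasurableSet[𝔉 s] B) (n : ℕ) :
    ∫⁻ ω in B, ENNReal.ofReal (stoppedRiemannSum (fun r => Λ r ω) (τ ω) s t n) ∂μ
      = ∫⁻ ω in B, ENNReal.ofReal (expRiemannSum (fun r => Λ r ω) s t n) ∂μ := by
  set p := uniformPartition s t n
  have hsp : ∀ i, s ≤ p i := fun i => by
    simpa [p] using monotone_uniformPartition (n := n) hst (Nat.zero_le i)
  set Δ : ℕ → Ω → ℝ := fun i ω => Λ (p (i + 1)) ω - Λ (p i) ω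
  have hΔ : ∀ i, Measurable[𝔉 (p (i + 1))] (Δ i) := fun i =>
    (hΛadapted _ (hs.trans (hsp _))).sub ((hΛadapted _ (hs.trans (hsp i))).mono
      (𝔉.mono (monotone_uniformPartition hst i.le_succ)) le_rfl)
  have hΔnn : ∀ i ∈ range (n + 1), ∀ ω, 0 ≤ Δ i ω := fun i hi ω =>
    sub_uniformPartition_nonneg hst (hΛmono ω) (mem_range.1 hi)
  have hterm : ∀ i ∈ range (n + 1),
      ∫⁻ ω in B, ENNReal.ofReal (if p (i + 1) < τ ω then Δ i ω else 0) ∂μ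
        = ∫⁻ ω in B, ENNReal.ofReal (Real.exp (-Λ (p (i + 1)) ω) * Δ i ω) ∂μ := by
    intro i _
    have h := setLIntegral_indicator_eq_of_condExp_indicator (𝔉.le _)
      (measurableSet_lt measurable_const hτ)
      (Real.measurable_exp.comp (hΛadapted _ (hs.trans (hsp _))).neg)
      (fun ω => (Real.exp_pos _).le) (hsurv _ (hs.trans (hsp _))) (𝔉.mono (hsp _) B hB)
      (hΔ i).ennreal_ofReal
    convert h using 3 with ω
    · by_cases hω : p (i + 1) < τ ω <;> simp [hω]
    · rw [ENNReal.ofReal_mul (Real.exp_pos _).le, mul_comm]; rfl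
  have hmeas : ∀ i, Measurable (Δ i) := fun i => (hΔ i).mono (𝔉.le _) le_rfl
  simp only [stoppedRiemannSum, expRiemannSum]
  rw [lintegral_congr fun ω => ENNReal.ofReal_sum_of_nonneg fun i hi => by
      split_ifs; exacts [hΔnn i hi ω, le_rfl],
    lintegral_congr fun ω => ENNReal.ofReal_sum_of_nonneg fun i hi =>
      mul_nonneg (Real.exp_pos _).le (hΔnn i hi ω),
    lintegral_finsetSum _ fun i _ => (Measurable.ite (measurableSet_lt measurable_const hτ)
      (hmeas i) measurable_const).ennreal_ofReal,
    lintegral_finsetSum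
      (f := fun i ω => ENNReal.ofReal (Real.exp (-Λ (p (i + 1)) ω) * Δ i ω)) _ fun i _ =>
        ((((hΛadapted _ (hs.trans (hsp _))).mono (𝔉.le _) le_rfl).neg.exp).mul
          (hmeas i)).ennreal_ofReal]
  exact sum_congr rfl hterm

lemma setLIntegral_ofReal_sub_min_eq (hτ : Measurable τ)
    (hΛadapted : ∀ r, 0 ≤ r → Measurable[𝔉 r] (Λ r))
    (hΛmono : ∀ ω, MonotoneOn (fun r => Λ r ω) (Set.Icc s t))
    (hΛcont : ∀ ω, ContinuousOn (fun r => Λ r ω) (Set.Icc s t)) (hΛs : ∀ ω, 0 ≤ Λ s ω)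
    (hsurv : ∀ r, 0 ≤ r → μ[{ω | r < τ ω}.indicator (fun _ => (1 : ℝ)) | 𝔉 r]
      =ᵐ[μ] fun ω => Real.exp (-Λ r ω))
    (hs : 0 ≤ s) (hst : s ≤ t) {B : Set Ω} (hB : MeasurableSet[𝔉 s] B) :
    ∫⁻ ω in B, ENNReal.ofReal (Λ (min t (τ ω)) ω - Λ (min s (τ ω)) ω) ∂μ
      = ∫⁻ ω in B, ENNReal.ofReal (Real.exp (-Λ s ω) - Real.exp (-Λ t ω)) ∂μ := by
  have hΛ : ∀ r ∈ Set.Icc s t, Measurable (Λ r) := fun r hr =>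
    (hΛadapted r (hs.trans hr.1)).mono (𝔉.le r) le_rfl
  refine tendsto_nhds_unique (tendsto_lintegral_of_tendsto_of_le
    (fun n => (measurable_stoppedRiemannSum hτ hΛ hst n).ennreal_ofReal.aemeasurable)
    (fun n ω => ENNReal.ofReal_le_ofReal (stoppedRiemannSum_le hst (hΛmono ω)))
    (fun ω => (ENNReal.continuous_ofReal.tendsto _).comp
      (tendsto_stoppedRiemannSum hst (hΛmono ω) (hΛcont ω)))) ?_
  simp_rw [setLIntegral_stoppedRiemannSum_eq hτ hΛadapted hΛmono hsurv hs hst hB]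
  exact tendsto_lintegral_of_tendsto_of_le
    (fun n => (measurable_expRiemannSum hΛ hst n).ennreal_ofReal.aemeasurable)
    (fun n ω => ENNReal.ofReal_le_ofReal expRiemannSum_le)
    (fun ω => (ENNReal.continuous_ofReal.tendsto _).comp
      (tendsto_expRiemannSum hst (hΛmono ω) (hΛcont ω) (hΛs ω)))

lemma integrable_exp_neg_sub_exp_neg (hΛsm : Measurable (Λ s)) (hΛtm : Measurable (Λ t))
    (hΛs : ∀ ω, 0 ≤ Λ s ω) (hΛle : ∀ ω, Λ s ω ≤ Λ t ω) :
    Integrable (fun ω => Real.exp (-Λ s ω) - Real.exp (-Λ t ω)) μ := by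
  refine Integrable.of_bound (hΛsm.neg.exp.sub hΛtm.neg.exp).aestronglyMeasurable 1
    (ae_of_all _ fun ω => ?_)
  have h₁ : Real.exp (-Λ t ω) ≤ Real.exp (-Λ s ω) :=
    Real.exp_le_exp.2 (neg_le_neg (hΛle ω))
  have h₂ : Real.exp (-Λ s ω) ≤ 1 := Real.exp_le_one_iff.2 (neg_nonpos.2 (hΛs ω))
  rw [Real.norm_eq_abs, abs_le]
  constructor <;> linarith [Real.exp_pos (-Λ t ω)]

lemma integrable_sub_min_and_setIntegral_eq (hτ : Measurable τ)
    (hΛadapted : ∀ r, 0 ≤ r → Measurable[𝔉 r] (Λ r))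
    (hΛmono : ∀ ω, MonotoneOn (fun r => Λ r ω) (Set.Icc s t))
    (hΛcont : ∀ ω, ContinuousOn (fun r => Λ r ω) (Set.Icc s t)) (hΛs : ∀ ω, 0 ≤ Λ s ω)
    (hsurv : ∀ r, 0 ≤ r → μ[{ω | r < τ ω}.indicator (fun _ => (1 : ℝ)) | 𝔉 r]
      =ᵐ[μ] fun ω => Real.exp (-Λ r ω))
    (hs : 0 ≤ s) (hst : s ≤ t) :
    Integrable (fun ω => Λ (min t (τ ω)) ω - Λ (min s (τ ω)) ω) μ ∧
      ∀ B, MeasurableSet[𝔉 s] B →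
        ∫ ω in B, Λ (min t (τ ω)) ω - Λ (min s (τ ω)) ω ∂μ
          = ∫ ω in B, Real.exp (-Λ s ω) - Real.exp (-Λ t ω) ∂μ := by
  have hΛ : ∀ r ∈ Set.Icc s t, Measurable (Λ r) := fun r hr =>
    (hΛadapted r (hs.trans hr.1)).mono (𝔉.le r) le_rfl
  have hΛle : ∀ ω, Λ s ω ≤ Λ t ω := fun ω =>
    hΛmono ω ⟨le_rfl, hst⟩ ⟨hst, le_rfl⟩ hst
  have hXm := measurable_sub_min hτ hΛ hΛmono hΛcont hst
  have hX0 : ∀ ω, 0 ≤ Λ (min t (τ ω)) ω - Λ (min s (τ ω)) ω := fun ω =>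
    sub_min_nonneg hst (hΛmono ω)
  have hE := integrable_exp_neg_sub_exp_neg (μ := μ) (hΛ s ⟨le_rfl, hst⟩)
    (hΛ t ⟨hst, le_rfl⟩) hΛs hΛle
  have hE0 : ∀ ω, 0 ≤ Real.exp (-Λ s ω) - Real.exp (-Λ t ω) := fun ω =>
    sub_nonneg.2 (Real.exp_le_exp.2 (neg_le_neg (hΛle ω)))
  have hlint := fun {B} => setLIntegral_ofReal_sub_min_eq (μ := μ) (B := B) hτ hΛadapted hΛmono
    hΛcont hΛs hsurv hs hst
  refine ⟨⟨hXm.aestronglyMeasurable, (hasFiniteIntegral_iff_ofReal (ae_of_all _ hX0)).2 ?_⟩,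
    fun B hB => ?_⟩
  · have h := hlint MeasurableSet.univ
    rw [Measure.restrict_univ] at h
    exact h ▸ (hasFiniteIntegral_iff_ofReal (ae_of_all _ hE0)).1 hE.hasFiniteIntegral
  · rw [integral_eq_lintegral_of_nonneg_ae (ae_of_all _ hX0) hXm.aestronglyMeasurable,
      integral_eq_lintegral_of_nonneg_ae (ae_of_all _ hE0) hE.integrableOn.aestronglyMeasurable,
      hlint hB]

lemma integrable_indicator_mul_one_sub_condExp_and_setIntegral_eq (hτ : Measurable τ)
    (hΛadapted : ∀ r, 0 ≤ r → Measurable[𝔉 r] (Λ r)) (hΛs : ∀ ω, 0 ≤ Λ s ω)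
    (hΛle : ∀ ω, Λ s ω ≤ Λ t ω)
    (hsurv : μ[{ω | s < τ ω}.indicator (fun _ => (1 : ℝ)) | 𝔉 s]
      =ᵐ[μ] fun ω => Real.exp (-Λ s ω))
    (hs : 0 ≤ s) (hst : s ≤ t) :
    Integrable (fun ω => {ω | s < τ ω}.indicator (fun _ => (1 : ℝ)) ω
        * (1 - (μ[fun ω => Real.exp (-(Λ t ω - Λ s ω)) | 𝔉 s]) ω)) μ ∧
      ∀ B, MeasurableSet[𝔉 s] B →
        ∫ ω in B, {ω | s < τ ω}.indicator (fun _ => (1 : ℝ)) ω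
            * (1 - (μ[fun ω => Real.exp (-(Λ t ω - Λ s ω)) | 𝔉 s]) ω) ∂μ
          = ∫ ω in B, Real.exp (-Λ s ω) - Real.exp (-Λ t ω) ∂μ := by
  set S := {ω | s < τ ω}
  set g : Ω → ℝ := fun ω => Real.exp (-(Λ t ω - Λ s ω))
  set Y := μ[g | 𝔉 s]
  have hΛsm : Measurable[𝔉 s] (Λ s) := hΛadapted s hs
  have hΛtm : Measurable (Λ t) := (hΛadapted t (hs.trans hst)).mono (𝔉.le t) le_rfl
  have hS : MeasurableSet S := measurableSet_lt measurable_const hτ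
  have hSint : Integrable (S.indicator fun _ => (1 : ℝ)) μ := (integrable_const 1).indicator hS
  have hgint : Integrable g μ :=
    Integrable.of_bound (hΛtm.sub (hΛsm.mono (𝔉.le s) le_rfl)).neg.exp.aestronglyMeasurable 1
      (ae_of_all _ fun ω => by
        rw [Real.norm_eq_abs, abs_of_pos (Real.exp_pos _), Real.exp_le_one_iff, neg_nonpos,
          sub_nonneg]
        exact hΛle ω)
  have hWint : Integrable ((fun ω => 1 - Y ω) * S.indicator fun _ => (1 : ℝ)) μ :=
    ((integrable_const 1).sub integrable_condExp).mul_bdd (c := 1) hSint.aestronglyMeasurable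
      (ae_of_all _ fun ω => by by_cases hω : ω ∈ S <;> simp [hω])
  have hE : (fun ω => Real.exp (-Λ s ω) - Real.exp (-Λ t ω))
      = (fun ω => Real.exp (-Λ s ω)) * fun ω => 1 - g ω := by
    ext ω
    simp only [Pi.mul_apply, g, mul_sub, mul_one, ← Real.exp_add]
    ring_nf
  have hEint : Integrable (fun ω => Real.exp (-Λ s ω) - Real.exp (-Λ t ω)) μ :=
    integrable_exp_neg_sub_exp_neg (hΛsm.mono (𝔉.le s) le_rfl) hΛtm hΛs hΛle
  have hW : μ[(fun ω => 1 - Y ω) * S.indicator fun _ => (1 : ℝ) | 𝔉 s]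
      =ᵐ[μ] (fun ω => 1 - Y ω) * fun ω => Real.exp (-Λ s ω) :=
    (condExp_mul_of_stronglyMeasurable_left
      (stronglyMeasurable_const.sub stronglyMeasurable_condExp) hWint hSint).trans
      (hsurv.mono fun ω hω => by simp only [Pi.mul_apply, hω]; rfl)
  have hE' : μ[fun ω => Real.exp (-Λ s ω) - Real.exp (-Λ t ω) | 𝔉 s]
      =ᵐ[μ] (fun ω => 1 - Y ω) * fun ω => Real.exp (-Λ s ω) := by
    rw [hE]
    refine (condExp_mul_of_stronglyMeasurable_left hΛsm.neg.exp.stronglyMeasurable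
      (hE ▸ hEint) ((integrable_const 1).sub hgint)).trans ?_
    filter_upwards [condExp_sub (integrable_const 1) hgint (𝔉 s)] with ω hω
    rw [Pi.mul_apply, Pi.mul_apply, hω, Pi.sub_apply, condExp_const (𝔉.le s), mul_comm]
    rfl
  have hcomm : (fun ω => S.indicator (fun _ => (1 : ℝ)) ω * (1 - Y ω))
      = (fun ω => 1 - Y ω) * S.indicator fun _ => (1 : ℝ) := funext fun _ => mul_comm _ _
  refine ⟨hcomm ▸ hWint, fun B hB => ?_⟩
  rw [hcomm, ← setIntegral_condExp (𝔉.le s) hWint hB,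
    ← setIntegral_condExp (𝔉.le s) hEint hB]
  exact setIntegral_congr_ae (𝔉.le s B hB) ((hW.trans hE'.symm).mono fun _ h _ => h)

end HazardProcess

theorem stmt9_general {Ω : Type*} {m𝔉 : MeasurableSpace Ω} (μ : Measure Ω) [IsProbabilityMeasure μ]
    (𝔉 : MeasureTheory.Filtration ℝ m𝔉)
    (τ : Ω → ℝ) (hτmeas : Measurable τ)
    (Λ : ℝ → Ω → ℝ)
    (hΛadapted : ∀ t : ℝ, 0 ≤ t → Measurable[𝔉 t] (Λ t))
    (hΛnn : ∀ t : ℝ, 0 ≤ t → ∀ ω, 0 ≤ Λ t ω)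
    (hΛmono : ∀ ω, MonotoneOn (fun t => Λ t ω) (Set.Ici 0))
    (hΛcont : ∀ ω, ContinuousOn (fun t => Λ t ω) (Set.Ici 0))
    (hsurv : ∀ t : ℝ, 0 ≤ t →
      μ[Set.indicator {ω | t < τ ω} (fun _ => (1 : ℝ)) | 𝔉 t]
        =ᵐ[μ] fun ω => Real.exp (-Λ t ω))
    (ℱ : ℝ → MeasurableSpace Ω)
    (hℱ : ∀ s : ℝ, ℱ s = 𝔉 s ⊔ MeasurableSpace.generateFrom
        {A | ∃ r : ℝ, 0 ≤ r ∧ r ≤ s ∧ A = {ω | r < τ ω}})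
    (s t : ℝ) (hs : 0 ≤ s) (hst : s ≤ t) :
    Integrable (fun ω => Λ (min t (τ ω)) ω - Λ (min s (τ ω)) ω) μ ∧
    μ[fun ω => Λ (min t (τ ω)) ω - Λ (min s (τ ω)) ω | ℱ s]
      =ᵐ[μ] fun ω =>
        Set.indicator {ω' | s < τ ω'} (fun _ => (1 : ℝ)) ω
          * (1 - (μ[fun ω' => Real.exp (-(Λ t ω' - Λ s ω')) | 𝔉 s]) ω) := by
  have hIcc : Set.Icc s t ⊆ Set.Ici 0 := fun r hr => hs.trans hr.1
  obtain ⟨hXint, hXB⟩ := integrable_sub_min_and_setIntegral_eq hτmeas hΛadapted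
    (fun ω => (hΛmono ω).mono hIcc) (fun ω => (hΛcont ω).mono hIcc) (hΛnn s hs) hsurv hs hst
  obtain ⟨hWint, hWB⟩ := integrable_indicator_mul_one_sub_condExp_and_setIntegral_eq hτmeas
    hΛadapted (hΛnn s hs) (fun ω => hΛmono ω hs (hs.trans hst) hst) (hsurv s hs) hs hst
  have hℱle : ℱ s ≤ m𝔉 := hℱ s ▸ sup_le (𝔉.le s)
    (MeasurableSpace.generateFrom_le fun _ ⟨_, _, _, hA⟩ =>
      hA ▸ measurableSet_lt measurable_const hτmeas)
  have hS : MeasurableSet[ℱ s] {ω | s < τ ω} :=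
    hℱ s ▸ le_sup_right (a := (𝔉 s : MeasurableSpace Ω)) _
      (MeasurableSpace.measurableSet_generateFrom ⟨s, hs, le_rfl, rfl⟩)
  have htrace : ∀ A, MeasurableSet[ℱ s] A →
      ∃ B, MeasurableSet[𝔉 s] B ∧ {ω | s < τ ω} ∩ A = {ω | s < τ ω} ∩ B :=
    fun _ hA => exists_inter_eq_of_measurableSet_sup_generateFrom
      (by rintro _ ⟨r, -, hrs, rfl⟩ ω hω; exact hrs.trans_lt hω) (hℱ s ▸ hA)
  refine ⟨hXint, (ae_eq_condExp_of_forall_setIntegral_eq_of_inter_eq (𝔉.le s) hℱle htrace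
    hXint hWint ((stronglyMeasurable_const.indicator hS).mul
      (stronglyMeasurable_const.sub (stronglyMeasurable_condExp.mono (hℱ s ▸ le_sup_left))))
    (fun ω hω => not_le.1 fun hτs => hω (sub_min_eq_zero_of_le (f := (Λ · ω)) hτs hst))
    ((Function.support_mul_subset_left _ _).trans Set.support_indicator_subset)
    fun B hB => (hWB B hB).trans (hXB B hB).symm).symm⟩

/-- In the hazard-process setup, for all `0 ≤ s ≤ t`, the random variable
`Λ_{t∧τ} − Λ_{s∧τ}` is integrable and, almost surely,
`E[Λ_{t∧τ} − Λ_{s∧τ} | ℱ_s] = 1_{s<τ} · (1 − E[e^{−(Λ_t − Λ_s)} | 𝔉̂_s])`,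
where `ℱ_s = 𝔉̂_s ⊔ σ({τ > r} : r ∈ [0,s])`. -/
theorem stmt9 {Ω : Type*} {m𝔉 : MeasurableSpace Ω} (μ : Measure Ω) [IsProbabilityMeasure μ]
    (𝔉 : MeasureTheory.Filtration ℝ m𝔉)
    (τ : Ω → ℝ) (hτmeas : Measurable τ) (hτnn : ∀ ω, 0 ≤ τ ω)
    (Λ : ℝ → Ω → ℝ)
    (hΛadapted : ∀ t : ℝ, 0 ≤ t → Measurable[𝔉 t] (Λ t))
    (hΛ0 : ∀ ω, Λ 0 ω = 0)
    (hΛnn : ∀ t : ℝ, 0 ≤ t → ∀ ω, 0 ≤ Λ t ω)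
    (hΛmono : ∀ ω, MonotoneOn (fun t => Λ t ω) (Set.Ici 0))
    (hΛcont : ∀ ω, ContinuousOn (fun t => Λ t ω) (Set.Ici 0))
    (hΛtop : ∀ᵐ ω ∂μ, Filter.Tendsto (fun t => Λ t ω) Filter.atTop Filter.atTop)
    (hsurv : ∀ t : ℝ, 0 ≤ t →
      μ[Set.indicator {ω | t < τ ω} (fun _ => (1 : ℝ)) | 𝔉 t]
        =ᵐ[μ] fun ω => Real.exp (-Λ t ω))
    (ℱ : ℝ → MeasurableSpace Ω)
    (hℱ : ∀ s : ℝ, ℱ s = 𝔉 s ⊔ MeasurableSpace.generateFrom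
        {A | ∃ r : ℝ, 0 ≤ r ∧ r ≤ s ∧ A = {ω | r < τ ω}})
    (s t : ℝ) (hs : 0 ≤ s) (hst : s ≤ t) :
    Integrable (fun ω => Λ (min t (τ ω)) ω - Λ (min s (τ ω)) ω) μ ∧
    μ[fun ω => Λ (min t (τ ω)) ω - Λ (min s (τ ω)) ω | ℱ s]
      =ᵐ[μ] fun ω =>
        Set.indicator {ω' | s < τ ω'} (fun _ => (1 : ℝ)) ω
          * (1 - (μ[fun ω' => Real.exp (-(Λ t ω' - Λ s ω')) | 𝔉 s]) ω) :=
  stmt9_general μ 𝔉 τ hτmeas Λ hΛadapted hΛnn hΛmono hΛcont hsurv ℱ hℱ s t hs hst
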